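/- arXiv:1903.11090 — 2 statements merged into one kernel-verified Lean document; each statement's English description precedes it below -/
import Mathlib

section
/- Let N ≥ 3, μ ∈ (0,1/4], let Ω ⊂ ℝ^N be a nonempty bounded open set with δ(x) the Euclidean distance from x to the complement of Ω, and let D ⊆ Ω be a nonempty open set. Let g : [0,∞) → ℝ be locally Lipschitz and satisfy g(εt) ≤ ε·g(t) for all t > 0 and all ε ∈ (0,1]. Let u₁, u₂ be twice continuously differentiable on D with u₁ ≥ 0 and u₂ > 0 on D, and suppose that Δu₁(x) + (μ/δ(x)²)·u₁(x) ≥ g(‖∇u₁(x)‖) for all x ∈ D (u₁ is a subsolution) and Δu₂(x) + (μ/δ(x)²)·u₂(x) ≤ g(‖∇u₂(x)‖) for all x ∈ D (u₂ is a supersolution). Assume further that there exist a compact set K ⊆ D and a constant c > 0 such that u₁(x) ≤ u₂(x) − c for all x ∈ D \ K. Then u₁(x) ≤ u₂(x) for all x ∈ D. -/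
open MeasureTheory Metric Set

/-- The Laplacian of `u : ℝ^N → ℝ`, as the sum of the second partial derivatives
in the coordinate directions. -/
noncomputable def lap {N : ℕ} (u : EuclideanSpace ℝ (Fin N) → ℝ)
    (x : EuclideanSpace ℝ (Fin N)) : ℝ :=
  ∑ i : Fin N, fderiv ℝ (fun y => fderiv ℝ u y (EuclideanSpace.single i 1)) x
    (EuclideanSpace.single i 1)

/-!
If `u₁ > u₂` somewhere, this happens in `K`, and `τ := max_K u₁/u₂ > 1`. Perturb `u₁ - τ u₂`
by `ε ψ` with `ψ x = exp (α x₀)` (`x₀` the first coordinate), where `α` exceeds the Lipschitz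
constant `L` of `g` on the range of gradient norms over `K`, and `ε` keeps `ε ψ ≤ c/2` on the
bounded set `D`. The perturbed function is positive where `u₁ = τ u₂` and at most `-c/2` off `K`,
so it has an interior maximum `z ∈ K`. There `∇u₁ - τ ∇u₂ = -ε ∇ψ` and
`Δu₁ - τ Δu₂ + ε α² ψ ≤ 0`; together with `g(τ t) ≥ τ g(t)` (subhomogeneity and `g 0 ≤ 0`),
`u₁ ≤ τ u₂` at `z` and `μ ≥ 0`, the sub- and supersolution inequalities force `α ≤ L`.
-/

open Filter Topology Laplacian InnerProductSpace

lemma IsLocalMax.deriv_deriv_nonpos {f : ℝ → ℝ} {t : ℝ} (h : IsLocalMax f t)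
    (hc : ContinuousAt f t) : deriv (deriv f) t ≤ 0 := by
  by_contra! hpos
  have hconst : f =ᶠ[𝓝 t] fun _ => f t := by
    filter_upwards [h, isLocalMin_of_deriv_deriv_pos hpos h.deriv_eq_zero hc] with s h₁ h₂
    exact le_antisymm h₁ h₂
  simp [hconst.deriv.deriv_eq] at hpos

lemma IsLocalMax.fderiv_fderiv_apply_self_nonpos {E : Type*} [NormedAddCommGroup E]
    [NormedSpace ℝ E] {f : E → ℝ} {x : E} (h : IsLocalMax f x) (hf : ContDiffAt ℝ 2 f x)
    (v : E) : fderiv ℝ (fderiv ℝ f) x v v ≤ 0 := by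
  have hline : ∀ t : ℝ, HasDerivAt (fun s : ℝ => x + s • v) v t := fun t => by
    simpa using ((hasDerivAt_id t).smul_const v).const_add x
  have hcont : Tendsto (fun s : ℝ => x + s • v) (𝓝 0) (𝓝 x) := by
    simpa using (hline 0).continuousAt.tendsto
  have hdiff : ∀ᶠ y in 𝓝 x, DifferentiableAt ℝ f y :=
    (hf.eventually (by simp)).mono fun y hy => hy.differentiableAt (by norm_num)
  have hderiv : deriv (fun s : ℝ => f (x + s • v)) =ᶠ[𝓝 0]
      fun s => fderiv ℝ f (x + s • v) v := by
    filter_upwards [hcont.eventually hdiff] with s hs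
    exact (hs.hasFDerivAt.comp_hasDerivAt s (hline s)).deriv
  have hf' : DifferentiableAt ℝ (fderiv ℝ f) x :=
    (hf.fderiv_right (m := 1) (by norm_num)).differentiableAt one_ne_zero
  have hsecond : HasDerivAt (fun s : ℝ => fderiv ℝ f (x + s • v) v)
      (fderiv ℝ (fderiv ℝ f) x v v) 0 := by
    have := hf'.hasFDerivAt.comp_hasDerivAt_of_eq (0 : ℝ) (hline 0) (by simp)
    simpa using this.clm_apply (hasDerivAt_const (0 : ℝ) v)
  have hmax : IsLocalMax (fun s : ℝ => f (x + s • v)) 0 := by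
    simpa [IsLocalMax, IsMaxFilter] using hcont.eventually h
  rw [← hsecond.deriv, ← hderiv.deriv_eq]
  exact hmax.deriv_deriv_nonpos <| by
    simpa [ContinuousAt, Function.comp_def] using hf.continuousAt.tendsto.comp hcont

lemma IsLocalMax.laplacian_nonpos {E : Type*} [NormedAddCommGroup E] [InnerProductSpace ℝ E]
    [FiniteDimensional ℝ E] {f : E → ℝ} {x : E} (h : IsLocalMax f x)
    (hf : ContDiffAt ℝ 2 f x) : Δ f x ≤ 0 := by
  rw [laplacian_eq_iteratedFDeriv_stdOrthonormalBasis]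
  exact Finset.sum_nonpos fun i _ => by
    simpa [iteratedFDeriv_two_apply] using h.fderiv_fderiv_apply_self_nonpos hf _

section Lap
variable {N : ℕ} {x : EuclideanSpace ℝ (Fin N)}

lemma lap_eq_laplacian {f : EuclideanSpace ℝ (Fin N) → ℝ} (hf : ContDiffAt ℝ 2 f x) :
    lap f x = Δ f x := by
  have hf' : DifferentiableAt ℝ (fderiv ℝ f) x :=
    (hf.fderiv_right (m := 1) (by norm_num)).differentiableAt one_ne_zero
  rw [laplacian_eq_iteratedFDeriv_orthonormalBasis f (EuclideanSpace.basisFun (Fin N) ℝ)]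
  simp [lap, iteratedFDeriv_two_apply, fderiv_clm_apply hf' (differentiableAt_const _)]

lemma IsLocalMax.lap_nonpos {f : EuclideanSpace ℝ (Fin N) → ℝ} (h : IsLocalMax f x)
    (hf : ContDiffAt ℝ 2 f x) : lap f x ≤ 0 :=
  lap_eq_laplacian hf ▸ h.laplacian_nonpos hf

lemma lap_sub_smul_add_smul {u₁ u₂ ψ : EuclideanSpace ℝ (Fin N) → ℝ}
    (h₁ : ContDiffAt ℝ 2 u₁ x) (h₂ : ContDiffAt ℝ 2 u₂ x) (hψ : ContDiffAt ℝ 2 ψ x) (τ ε : ℝ) :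
    lap (u₁ - τ • u₂ + ε • ψ) x = lap u₁ x - τ * lap u₂ x + ε * lap ψ x := by
  have hτu₂ : ContDiffAt ℝ 2 (τ • u₂) x := h₂.const_smul τ
  have hεψ : ContDiffAt ℝ 2 (ε • ψ) x := hψ.const_smul ε
  have hdiff : ContDiffAt ℝ 2 (u₁ - τ • u₂) x := h₁.sub hτu₂
  rw [lap_eq_laplacian (f := u₁ - τ • u₂ + ε • ψ) (hdiff.add hεψ), hdiff.laplacian_add hεψ,
    h₁.laplacian_sub hτu₂, laplacian_smul τ h₂, laplacian_smul ε hψ, lap_eq_laplacian h₁,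
    lap_eq_laplacian h₂, lap_eq_laplacian hψ, smul_eq_mul, smul_eq_mul]

end Lap

section ExpCoord
variable {N : ℕ} (α : ℝ) (i : Fin N)

noncomputable def expCoord (x : EuclideanSpace ℝ (Fin N)) : ℝ := Real.exp (α * x i)

lemma contDiff_expCoord : ContDiff ℝ 2 (expCoord α i) :=
  Real.contDiff_exp.comp (contDiff_const.mul (EuclideanSpace.proj (𝕜 := ℝ) i).contDiff)

lemma hasFDerivAt_expCoord (x : EuclideanSpace ℝ (Fin N)) :
    HasFDerivAt (expCoord α i) ((α * expCoord α i x) • EuclideanSpace.proj (𝕜 := ℝ) i) x := by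
  have := (Real.hasDerivAt_exp _).comp_hasFDerivAt x
    ((EuclideanSpace.proj (𝕜 := ℝ) i).hasFDerivAt.const_mul α)
  unfold expCoord
  simpa [smul_smul, mul_comm, Function.comp_def] using this

lemma fderiv_expCoord_apply (x v : EuclideanSpace ℝ (Fin N)) :
    fderiv ℝ (expCoord α i) x v = α * v i * expCoord α i x := by
  simp only [(hasFDerivAt_expCoord α i x).fderiv, smul_apply, PiLp.proj_apply, smul_eq_mul]
  ring

lemma norm_fderiv_expCoord_le (hα : 0 ≤ α) (x : EuclideanSpace ℝ (Fin N)) :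
    ‖fderiv ℝ (expCoord α i) x‖ ≤ α * expCoord α i x := by
  have hpos : 0 < expCoord α i x := Real.exp_pos _
  refine ContinuousLinearMap.opNorm_le_bound _ (by positivity) fun v => ?_
  calc ‖fderiv ℝ (expCoord α i) x v‖ = α * expCoord α i x * ‖v i‖ := by
        rw [fderiv_expCoord_apply, Real.norm_eq_abs, Real.norm_eq_abs, abs_mul, abs_mul,
          abs_of_nonneg hα, abs_of_pos hpos]
        ring
    _ ≤ α * expCoord α i x * ‖v‖ := by gcongr; exact PiLp.norm_apply_le v i

lemma lap_expCoord (x : EuclideanSpace ℝ (Fin N)) :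
    lap (expCoord α i) x = α ^ 2 * expCoord α i x := by
  simp only [lap, fderiv_expCoord_apply,
    fderiv_const_mul (hasFDerivAt_expCoord α i x).differentiableAt, smul_apply, smul_eq_mul]
  rw [Finset.sum_eq_single i (fun j _ hj => by simp [Ne.symm hj]) (by simp),
    PiLp.single_eq_same]
  ring

lemma expCoord_le_exp_mul (hα : 0 ≤ α) {B : ℝ} {x : EuclideanSpace ℝ (Fin N)} (hx : ‖x‖ ≤ B) :
    expCoord α i x ≤ Real.exp (α * B) := by
  have : x i ≤ B := (le_abs_self _).trans ((PiLp.norm_apply_le x i).trans hx)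
  exact Real.exp_le_exp.2 (by gcongr)

end ExpCoord

lemma apply_zero_nonpos_of_subhomogeneous {g : ℝ → ℝ}
    (hgh : ∀ t : ℝ, 0 < t → ∀ ε ∈ Ioc (0 : ℝ) 1, g (ε * t) ≤ ε * g t)
    (hg : ContinuousWithinAt g (Ici 0) 0) : g 0 ≤ 0 := by
  have hlim : Tendsto g (𝓝[>] 0) (𝓝 (g 0)) :=
    hg.mono_left (nhdsWithin_mono _ Ioi_subset_Ici_self)
  have hlin : Tendsto (fun ε => ε * g 1) (𝓝[>] 0) (𝓝 0) :=
    ((continuous_id.mul continuous_const).tendsto' 0 0 (by simp)).mono_left nhdsWithin_le_nhds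
  refine le_of_tendsto_of_tendsto hlim hlin ?_
  filter_upwards [Ioc_mem_nhdsGT one_pos] with ε hε
  simpa using hgh 1 one_pos ε hε

lemma mul_apply_le_apply_mul_of_subhomogeneous {g : ℝ → ℝ}
    (hgh : ∀ t : ℝ, 0 < t → ∀ ε ∈ Ioc (0 : ℝ) 1, g (ε * t) ≤ ε * g t) (hg0 : g 0 ≤ 0)
    {τ b : ℝ} (hτ : 1 ≤ τ) (hb : 0 ≤ b) : τ * g b ≤ g (τ * b) := by
  rcases hb.eq_or_lt with rfl | hb
  · simp only [mul_zero]
    nlinarith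
  have h := hgh (τ * b) (by positivity) τ⁻¹ ⟨by positivity, inv_le_one_of_one_le₀ hτ⟩
  rw [inv_mul_cancel_left₀ (by positivity)] at h
  calc τ * g b ≤ τ * (τ⁻¹ * g (τ * b)) := by gcongr
    _ = g (τ * b) := by field_simp

lemma norm_gradient_eq_norm_fderiv {F : Type*} [NormedAddCommGroup F] [InnerProductSpace ℝ F]
    [CompleteSpace F] (f : F → ℝ) (x : F) : ‖gradient f x‖ = ‖fderiv ℝ f x‖ :=
  (InnerProductSpace.toDual ℝ F).symm.norm_map _

section Compact
variable {X : Type*} [TopologicalSpace X] {K : Set X}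

lemma IsCompact.exists_ratio_max (hK : IsCompact K) {u₁ u₂ : X → ℝ} (h₁ : ContinuousOn u₁ K)
    (h₂ : ContinuousOn u₂ K) (hpos : ∀ x ∈ K, 0 < u₂ x) {y₀ : X} (hy₀K : y₀ ∈ K)
    (hy₀ : u₂ y₀ < u₁ y₀) :
    ∃ τ, 1 < τ ∧ (∀ x ∈ K, u₁ x ≤ τ * u₂ x) ∧ ∃ y ∈ K, u₁ y = τ * u₂ y := by
  obtain ⟨y, hyK, hy⟩ := hK.exists_isMaxOn ⟨y₀, hy₀K⟩ (h₁.div h₂ fun x hx => (hpos x hx).ne')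
  refine ⟨u₁ y / u₂ y, ?_, fun x hx => ?_, y, hyK, (div_mul_cancel₀ _ (hpos y hyK).ne').symm⟩
  · exact ((one_lt_div (hpos y₀ hy₀K)).2 hy₀).trans_le (hy hy₀K)
  · exact (div_le_iff₀ (hpos x hx)).1 (hy hx)

lemma IsCompact.exists_isMaxOn_of_le_off {D : Set X} (hK : IsCompact K) {F : X → ℝ}
    (hF : ContinuousOn F K) {y : X} (hy : y ∈ K) (hout : ∀ x ∈ D \ K, F x ≤ F y) :
    ∃ z ∈ K, IsMaxOn F D z := by
  obtain ⟨z, hzK, hz⟩ := hK.exists_isMaxOn ⟨y, hy⟩ hF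
  refine ⟨z, hzK, fun x hx => ?_⟩
  by_cases hxK : x ∈ K
  · exact hz hxK
  · exact (hout x ⟨hx, hxK⟩).trans (hz hy)

end Compact

lemma le_of_isLocalMax_sub_smul_add_smul_expCoord {N : ℕ} {g : ℝ → ℝ} {L : NNReal} {R : ℝ}
    (hg : LipschitzOnWith L g (Icc 0 R)) (hg0 : g 0 ≤ 0)
    (hgh : ∀ t : ℝ, 0 < t → ∀ ε ∈ Ioc (0 : ℝ) 1, g (ε * t) ≤ ε * g t)
    {u₁ u₂ : EuclideanSpace ℝ (Fin N) → ℝ} {x : EuclideanSpace ℝ (Fin N)} {q τ ε α : ℝ}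
    {i : Fin N} (hu₁ : ContDiffAt ℝ 2 u₁ x) (hu₂ : ContDiffAt ℝ 2 u₂ x) (hq : 0 ≤ q)
    (hτ : 1 ≤ τ) (hε : 0 < ε) (hα : 0 < α) (hx : u₁ x ≤ τ * u₂ x)
    (hR₁ : ‖fderiv ℝ u₁ x‖ ≤ R) (hR₂ : τ * ‖fderiv ℝ u₂ x‖ ≤ R)
    (hsub : g ‖gradient u₁ x‖ ≤ lap u₁ x + q * u₁ x)
    (hsup : lap u₂ x + q * u₂ x ≤ g ‖gradient u₂ x‖)
    (hmax : IsLocalMax (u₁ - τ • u₂ + ε • expCoord α i) x) : α ≤ L := by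
  set ψ := expCoord α i
  have hψ : ContDiffAt ℝ 2 ψ x := (contDiff_expCoord α i).contDiffAt
  have hψpos : 0 < ψ x := Real.exp_pos _
  set a := ‖fderiv ℝ u₁ x‖
  set b := ‖fderiv ℝ u₂ x‖
  have hcrit : fderiv ℝ u₁ x - τ • fderiv ℝ u₂ x = -(ε • fderiv ℝ ψ x) :=
    eq_neg_of_add_eq_zero_left <| hmax.hasFDerivAt_eq_zero <|
      ((hu₁.differentiableAt (by norm_num)).hasFDerivAt.sub
        ((hu₂.differentiableAt (by norm_num)).hasFDerivAt.const_smul τ)).add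
        ((hψ.differentiableAt (by norm_num)).hasFDerivAt.const_smul ε)
  have hgrad : |a - τ * b| ≤ ε * (α * ψ x) :=
    calc |a - τ * b| = |‖fderiv ℝ u₁ x‖ - ‖τ • fderiv ℝ u₂ x‖| := by
          rw [norm_smul, Real.norm_of_nonneg (by linarith)]
      _ ≤ ‖fderiv ℝ u₁ x - τ • fderiv ℝ u₂ x‖ := abs_norm_sub_norm_le _ _
      _ = ε * ‖fderiv ℝ ψ x‖ := by rw [hcrit, norm_neg, norm_smul, Real.norm_of_nonneg hε.le]
      _ ≤ ε * (α * ψ x) := by gcongr; exact norm_fderiv_expCoord_le α i hα.le x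
  have hlap : lap u₁ x - τ * lap u₂ x + ε * (α ^ 2 * ψ x) ≤ 0 := by
    rw [← lap_expCoord, ← lap_sub_smul_add_smul hu₁ hu₂ hψ]
    exact hmax.lap_nonpos ((hu₁.sub (hu₂.const_smul τ)).add (hψ.const_smul ε))
  have hlip : g (τ * b) - g a ≤ L * |a - τ * b| := by
    have := hg.dist_le_mul a ⟨norm_nonneg _, hR₁⟩ (τ * b) ⟨by positivity, hR₂⟩
    rw [Real.dist_eq, Real.dist_eq] at this
    linarith [neg_abs_le (g a - g (τ * b))]
  have hhom : τ * g b ≤ g (τ * b) :=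
    mul_apply_le_apply_mul_of_subhomogeneous hgh hg0 hτ (norm_nonneg _)
  rw [norm_gradient_eq_norm_fderiv] at hsub hsup
  -- g(τb) - Lεαψ ≤ g a ≤ Δu₁ + q u₁ ≤ τ(Δu₂ + q u₂) - εα²ψ ≤ τ g b - εα²ψ ≤ g(τb) - εα²ψ
  have hkey : ε * (α * ψ x) * α ≤ ε * (α * ψ x) * L := by
    linarith [mul_le_mul_of_nonneg_left hgrad L.coe_nonneg, mul_le_mul_of_nonneg_left hx hq,
      mul_le_mul_of_nonneg_left hsup (zero_le_one.trans hτ)]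
  exact le_of_mul_le_mul_left hkey (by positivity)

theorem stmt_3_general (N : ℕ) (hN : 3 ≤ N) (μ : ℝ) (hμ : μ ∈ Set.Ioc (0:ℝ) (1/4))
    (Ω : Set (EuclideanSpace ℝ (Fin N)))
    (hbdd : Bornology.IsBounded Ω)
    (D : Set (EuclideanSpace ℝ (Fin N))) (hD : D ⊆ Ω) (hDop : IsOpen D)
    (g : ℝ → ℝ)
    (hglip : ∀ t ∈ Set.Ici (0:ℝ), ∃ K : NNReal, ∃ s ∈ nhdsWithin t (Set.Ici (0:ℝ)),
      LipschitzOnWith K g s)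
    (hgh : ∀ t : ℝ, 0 < t → ∀ ε ∈ Set.Ioc (0:ℝ) 1, g (ε * t) ≤ ε * g t)
    (u₁ u₂ : EuclideanSpace ℝ (Fin N) → ℝ)
    (hu₁ : ContDiffOn ℝ 2 u₁ D) (hu₂ : ContDiffOn ℝ 2 u₂ D)
    (hu₂pos : ∀ x ∈ D, 0 < u₂ x)
    (hsub : ∀ x ∈ D, g ‖gradient u₁ x‖ ≤ lap u₁ x + (μ / (infDist x Ωᶜ) ^ 2) * u₁ x)
    (hsup : ∀ x ∈ D, lap u₂ x + (μ / (infDist x Ωᶜ) ^ 2) * u₂ x ≤ g ‖gradient u₂ x‖)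
    (K : Set (EuclideanSpace ℝ (Fin N))) (hK : K ⊆ D) (hKc : IsCompact K)
    (c : ℝ) (hc : 0 < c) (hbdry : ∀ x ∈ D \ K, u₁ x ≤ u₂ x - c) :
    ∀ x ∈ D, u₁ x ≤ u₂ x := by
  by_contra! ⟨y₀, hy₀D, hy₀⟩
  have hy₀K : y₀ ∈ K := by_contra fun h => by linarith [hbdry y₀ ⟨hy₀D, h⟩]
  obtain ⟨τ, hτ, hKτ, y, hyK, hy⟩ := hKc.exists_ratio_max (hu₁.continuousOn.mono hK)
    (hu₂.continuousOn.mono hK) (fun x hx => hu₂pos x (hK hx)) hy₀K hy₀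
  obtain ⟨C₁, hC₁⟩ := hKc.exists_bound_of_continuousOn
    ((hu₁.continuousOn_fderiv_of_isOpen hDop (by norm_num)).mono hK)
  obtain ⟨C₂, hC₂⟩ := hKc.exists_bound_of_continuousOn
    ((hu₂.continuousOn_fderiv_of_isOpen hDop (by norm_num)).mono hK)
  have hgloc : LocallyLipschitzOn (Ici 0) g := hglip
  obtain ⟨L, hL⟩ := (hgloc.mono (Icc_subset_Ici_self : Icc 0 (C₁ + τ * C₂) ⊆ Ici 0)
    ).exists_lipschitzOnWith_of_compact isCompact_Icc
  have hg0 := apply_zero_nonpos_of_subhomogeneous hgh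
    (hgloc.continuousOn.continuousWithinAt self_mem_Ici)
  obtain ⟨B, hB⟩ := hbdd.exists_norm_le
  set α : ℝ := L + 1
  set ε := c / (2 * Real.exp (α * B))
  set ψ := expCoord α (⟨0, by omega⟩ : Fin N)
  have hεψ : ∀ x ∈ D, ε * ψ x ≤ c / 2 := fun x hx =>
    calc ε * ψ x ≤ ε * Real.exp (α * B) := by
          gcongr; exact expCoord_le_exp_mul _ _ (by positivity) (hB x (hD hx))
      _ = c / 2 := by simp only [ε]; field_simp
  have hF : ContDiffOn ℝ 2 (u₁ - τ • u₂ + ε • ψ) D :=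
    (hu₁.sub (hu₂.const_smul τ)).add ((contDiff_expCoord _ _).contDiffOn.const_smul ε)
  obtain ⟨z, hzK, hz⟩ := hKc.exists_isMaxOn_of_le_off (hF.continuousOn.mono hK) hyK
    fun x hx => by
      have : 0 < ε * ψ y := mul_pos (by positivity) (Real.exp_pos _)
      simp only [Pi.add_apply, Pi.sub_apply, Pi.smul_apply, smul_eq_mul, hy]
      nlinarith [hbdry x hx, hεψ x hx.1, hu₂pos x hx.1]
  have hzD := hK hzK
  have hαL : α ≤ L := le_of_isLocalMax_sub_smul_add_smul_expCoord hL hg0 hgh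
    (hu₁.contDiffAt (hDop.mem_nhds hzD)) (hu₂.contDiffAt (hDop.mem_nhds hzD))
    (div_nonneg hμ.1.le (sq_nonneg _)) hτ.le (by positivity) (by positivity) (hKτ z hzK)
    (by nlinarith [hC₁ z hzK, (norm_nonneg _).trans (hC₂ z hzK)])
    (by nlinarith [hC₂ z hzK, (norm_nonneg _).trans (hC₁ z hzK)])
    (hsub z hzD) (hsup z hzD) (hz.isLocalMax (hDop.mem_nhds hzD))
  linarith

/-- Comparison principle (Lemma 4.6) for `-L_μ u + g(‖∇u‖) = 0`. -/
theorem stmt_3 (N : ℕ) (hN : 3 ≤ N) (μ : ℝ) (hμ : μ ∈ Set.Ioc (0:ℝ) (1/4))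
    (Ω : Set (EuclideanSpace ℝ (Fin N))) (hne : Ω.Nonempty)
    (hbdd : Bornology.IsBounded Ω) (hop : IsOpen Ω)
    (D : Set (EuclideanSpace ℝ (Fin N))) (hD : D ⊆ Ω) (hDne : D.Nonempty) (hDop : IsOpen D)
    (g : ℝ → ℝ)
    (hglip : ∀ t ∈ Set.Ici (0:ℝ), ∃ K : NNReal, ∃ s ∈ nhdsWithin t (Set.Ici (0:ℝ)),
      LipschitzOnWith K g s)
    (hgh : ∀ t : ℝ, 0 < t → ∀ ε ∈ Set.Ioc (0:ℝ) 1, g (ε * t) ≤ ε * g t)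
    (u₁ u₂ : EuclideanSpace ℝ (Fin N) → ℝ)
    (hu₁ : ContDiffOn ℝ 2 u₁ D) (hu₂ : ContDiffOn ℝ 2 u₂ D)
    (hu₁nn : ∀ x ∈ D, 0 ≤ u₁ x) (hu₂pos : ∀ x ∈ D, 0 < u₂ x)
    (hsub : ∀ x ∈ D, g ‖gradient u₁ x‖ ≤ lap u₁ x + (μ / (infDist x Ωᶜ) ^ 2) * u₁ x)
    (hsup : ∀ x ∈ D, lap u₂ x + (μ / (infDist x Ωᶜ) ^ 2) * u₂ x ≤ g ‖gradient u₂ x‖)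
    (K : Set (EuclideanSpace ℝ (Fin N))) (hK : K ⊆ D) (hKc : IsCompact K)
    (c : ℝ) (hc : 0 < c) (hbdry : ∀ x ∈ D \ K, u₁ x ≤ u₂ x - c) :
    ∀ x ∈ D, u₁ x ≤ u₂ x :=
  stmt_3_general N hN μ hμ Ω hbdd D hD hDop g hglip hgh u₁ u₂ hu₁ hu₂ hu₂pos hsub hsup K hK hKc c hc
    hbdry
end

section
/- Let N ≥ 3 be an integer, μ ∈ (0,1/4], α := 1/2 + √(1/4 − μ), and let q satisfy 1 < q < (N+α)/(N+α−1). Let α₀ ∈ (α,1) satisfy q < (N+α₀)/(N+α₀−1). Then there exists γ₂ > 0 such that the function u̲(x) := γ₂·x_N^{α₀}·|x|^{−(2−q)/(q−1)−α₀} satisfies Δu̲(x) + (μ/x_N²)·u̲(x) ≥ ‖∇u̲(x)‖^q for every x ∈ ℝ^N with x_N > 0. -/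
open MeasureTheory Metric Set

/-- The last coordinate index of `Fin N`. -/
def lastIdx (N : ℕ) (h : 0 < N) : Fin N := ⟨N - 1, by omega⟩

/-!
For `u = c x_k^a |x|^b` on `{x_k > 0}` one computes
`Δu = c (a(a-1) x_k^(a-2) |x|^b + b(b+2a+N-2) x_k^a |x|^(b-2))` and, since `x_k ≤ |x|`,
`|∇u| ≤ c (|a|+|b|) x_k^(a-1) |x|^b`. Take `a = α₀` and `b = -(2-q)/(q-1) - α₀`. Then `b < 0` and
`q < (N+α₀)/(N+α₀-1)` make the second Laplacian term nonnegative, and the first one adds up with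
the Hardy term to `c (a(a-1) + μ) x_k^(a-2) |x|^b`, positive because `α₀` exceeds the larger root
`α` of `s(s-1) + μ`. Both sides are homogeneous of degree `-q/(q-1)`, and `|∇u|^q` is bounded by
this term times `(x_k/|x|)^(-b(q-1)) ≤ 1` once `c^(q-1) (|a|+|b|)^q ≤ a(a-1) + μ`.
-/

theorem hasFDerivAt_norm_rpow_of_ne_zero {E : Type*} [NormedAddCommGroup E]
    [InnerProductSpace ℝ E] {x : E} (hx : x ≠ 0) (p : ℝ) :
    HasFDerivAt (fun y : E ↦ ‖y‖ ^ p) ((p * ‖x‖ ^ (p - 2)) • innerSL ℝ x) x := by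
  convert! (hasStrictFDerivAt_norm_sq x).hasFDerivAt.rpow_const (p := p / 2) (by simp [hx]) using 0
  simp_rw [← Real.rpow_natCast_mul (norm_nonneg _), ← Nat.cast_smul_eq_nsmul ℝ, smul_smul]
  ring_nf

theorem Real.rpow_add_mul_rpow_sub_le {t r : ℝ} (ht : 0 < t) (htr : t ≤ r) {e : ℝ}
    (he : 0 ≤ e) (p s : ℝ) : t ^ (p + e) * r ^ (s - e) ≤ t ^ p * r ^ s := by
  have hr : 0 < r := ht.trans_le htr
  rw [Real.rpow_add ht, Real.rpow_sub hr, mul_div_assoc', div_le_iff₀ (by positivity)]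
  have := Real.rpow_le_rpow ht.le htr he
  calc t ^ p * t ^ e * r ^ s = t ^ p * r ^ s * t ^ e := by ring
    _ ≤ t ^ p * r ^ s * r ^ e := by gcongr

theorem mul_sub_one_add_pos_of_sqrt_lt {μ a : ℝ} (hμ : μ ≤ 1 / 4)
    (ha : 1 / 2 + Real.sqrt (1 / 4 - μ) < a) : 0 < a * (a - 1) + μ := by
  have hsq := Real.sq_sqrt (show 0 ≤ 1 / 4 - μ by linarith)
  nlinarith [Real.sqrt_nonneg (1 / 4 - μ)]

theorem exists_pos_rpow_mul_le {s K C : ℝ} (hs : s ≠ 0) (hK : 0 < K) (hC : 0 < C) :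
    ∃ c > 0, c ^ s * K ≤ C :=
  ⟨(C / K) ^ s⁻¹, by positivity, by
    rw [Real.rpow_inv_rpow (by positivity) hs, div_mul_cancel₀ _ hK.ne']⟩

namespace EuclideanSpace

variable {N : ℕ} (k : Fin N) (c a b : ℝ) {x : EuclideanSpace ℝ (Fin N)}

theorem hasFDerivAt_coord_rpow_mul_norm_rpow (hx : 0 < x k) :
    HasFDerivAt (fun y : EuclideanSpace ℝ (Fin N) => c * y k ^ a * ‖y‖ ^ b)
      (c • ((a * x k ^ (a - 1) * ‖x‖ ^ b) • proj k
        + (b * x k ^ a * ‖x‖ ^ (b - 2)) • innerSL ℝ x)) x := by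
  have hx0 : x ≠ 0 := fun h => by simp [h] at hx
  have hcoord := ((proj k).hasFDerivAt (x := x)).rpow_const (p := a) (Or.inl hx.ne')
  have h := (hcoord.fun_mul (hasFDerivAt_norm_rpow_of_ne_zero hx0 b)).const_mul c
  simp only [coe_proj, ← mul_assoc] at h
  refine h.congr_fderiv ?_
  module

theorem proj_single_one (i : Fin N) :
    proj k (single i 1 : EuclideanSpace ℝ (Fin N)) = if k = i then 1 else 0 := by
  simp [PiLp.single_apply]

theorem innerSL_single_one (i : Fin N) : innerSL ℝ x (single i 1) = x i := by
  simp [inner_single_right]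

theorem fderiv_coord_rpow_mul_norm_rpow_single (hx : 0 < x k) (i : Fin N) :
    fderiv ℝ (fun y : EuclideanSpace ℝ (Fin N) => c * y k ^ a * ‖y‖ ^ b) x (single i 1)
      = (c * a * (if k = i then 1 else 0)) * x k ^ (a - 1) * ‖x‖ ^ b
        + c * b * x k ^ a * ‖x‖ ^ (b - 2) * x i := by
  simp only [(hasFDerivAt_coord_rpow_mul_norm_rpow k c a b hx).fderiv, smul_apply, add_apply,
    smul_eq_mul, proj_single_one, innerSL_single_one]
  ring

theorem fderiv_fderiv_coord_rpow_mul_norm_rpow_single (hx : 0 < x k) (i : Fin N) :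
    fderiv ℝ (fun y => fderiv ℝ (fun y : EuclideanSpace ℝ (Fin N) => c * y k ^ a * ‖y‖ ^ b)
        y (single i 1)) x (single i 1)
      = c * ((if k = i then a * (a - 1) * x k ^ (a - 2) * ‖x‖ ^ b
                + 2 * a * b * (x k ^ (a - 1) * x k) * ‖x‖ ^ (b - 2) else 0)
          + b * (b - 2) * x k ^ a * ‖x‖ ^ (b - 4) * x i ^ 2
          + b * x k ^ a * ‖x‖ ^ (b - 2)) := by
  have hopen : IsOpen {y : EuclideanSpace ℝ (Fin N) | 0 < y k} :=
    isOpen_lt continuous_const (proj k).continuous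
  have hpartial : (fun y => fderiv ℝ (fun y : EuclideanSpace ℝ (Fin N) => c * y k ^ a * ‖y‖ ^ b)
      y (single i 1)) =ᶠ[nhds x] fun y => (c * a * (if k = i then 1 else 0)) * y k ^ (a - 1)
        * ‖y‖ ^ b + c * b * y k ^ a * ‖y‖ ^ (b - 2) * y i :=
    Filter.eventuallyEq_of_mem (hopen.mem_nhds hx) fun y hy =>
      fderiv_coord_rpow_mul_norm_rpow_single k c a b hy i
  have hcoord :=
    hasFDerivAt_coord_rpow_mul_norm_rpow k (c * a * (if k = i then 1 else 0)) (a - 1) b hx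
  have hderiv := hcoord.fun_add
    ((hasFDerivAt_coord_rpow_mul_norm_rpow k (c * b) a (b - 2) hx).fun_mul (proj i).hasFDerivAt)
  simp only [coe_proj] at hderiv
  rw [hpartial.fderiv_eq, hderiv.fderiv, show a - 1 - 1 = a - 2 by ring,
    show b - 2 - 2 = b - 4 by ring]
  simp only [add_apply, smul_apply, smul_eq_mul, proj_single_one, innerSL_single_one]
  split_ifs with hki
  · subst hki
    ring
  · ring

theorem coord_le_norm (x : EuclideanSpace ℝ (Fin N)) : x k ≤ ‖x‖ :=
  (le_abs_self _).trans (by simpa using PiLp.norm_apply_le x k)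

theorem lap_coord_rpow_mul_norm_rpow (hx : 0 < x k) :
    lap (fun y : EuclideanSpace ℝ (Fin N) => c * y k ^ a * ‖y‖ ^ b) x
      = c * (a * (a - 1) * x k ^ (a - 2) * ‖x‖ ^ b
          + b * (b + 2 * a + N - 2) * x k ^ a * ‖x‖ ^ (b - 2)) := by
  have hr : 0 < ‖x‖ := hx.trans_le (coord_le_norm k x)
  have hsq : ∑ i, x i ^ 2 = ‖x‖ ^ 2 := (real_norm_sq_eq x).symm
  have hk : x k ^ (a - 1) * x k = x k ^ a := by
    rw [← Real.rpow_add_one hx.ne', sub_add_cancel]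
  have hr4 : ‖x‖ ^ (b - 4) * ‖x‖ ^ 2 = ‖x‖ ^ (b - 2) := by
    rw [← Real.rpow_natCast, ← Real.rpow_add hr]
    congr 1
    ring
  simp only [lap, fderiv_fderiv_coord_rpow_mul_norm_rpow_single k c a b hx, ← Finset.mul_sum,
    Finset.sum_add_distrib, Finset.sum_ite_eq, Finset.mem_univ, if_true, Finset.sum_const,
    Finset.card_univ, Fintype.card_fin, nsmul_eq_mul]
  rw [hsq, hk]
  linear_combination c * b * (b - 2) * x k ^ a * hr4

theorem norm_gradient_coord_rpow_mul_norm_rpow_le (hx : 0 < x k) :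
    ‖gradient (fun y : EuclideanSpace ℝ (Fin N) => c * y k ^ a * ‖y‖ ^ b) x‖
      ≤ |c| * (|a| + |b|) * (x k ^ (a - 1) * ‖x‖ ^ b) := by
  have htr := coord_le_norm k x
  have hr : 0 < ‖x‖ := hx.trans_le htr
  have hproj : ‖(proj k : EuclideanSpace ℝ (Fin N) →L[ℝ] ℝ)‖ ≤ 1 :=
    ContinuousLinearMap.opNorm_le_bound _ zero_le_one fun v => by
      simpa using PiLp.norm_apply_le v k
  have hhom : x k ^ a * ‖x‖ ^ (b - 1) ≤ x k ^ (a - 1) * ‖x‖ ^ b := by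
    simpa using Real.rpow_add_mul_rpow_sub_le hx htr zero_le_one (a - 1) b
  rw [gradient, LinearIsometryEquiv.norm_map,
    (hasFDerivAt_coord_rpow_mul_norm_rpow k c a b hx).fderiv]
  calc _ ≤ |c| * (|a * x k ^ (a - 1) * ‖x‖ ^ b| * 1
          + |b * x k ^ a * ‖x‖ ^ (b - 2)| * ‖x‖) := by
        rw [norm_smul, Real.norm_eq_abs]
        gcongr
        refine (norm_add_le _ _).trans ?_
        rw [norm_smul, norm_smul, innerSL_apply_norm, Real.norm_eq_abs, Real.norm_eq_abs]
        gcongr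
    _ = |c| * (|a| * (x k ^ (a - 1) * ‖x‖ ^ b) + |b| * (x k ^ a * ‖x‖ ^ (b - 1))) := by
        have hr1 : ‖x‖ ^ (b - 2) * ‖x‖ = ‖x‖ ^ (b - 1) := by
          rw [← Real.rpow_add_one hr.ne']
          ring_nf
        simp only [abs_mul, abs_of_pos (Real.rpow_pos_of_pos hx _),
          abs_of_pos (Real.rpow_pos_of_pos hr _), ← hr1]
        ring
    _ ≤ |c| * (|a| * (x k ^ (a - 1) * ‖x‖ ^ b) + |b| * (x k ^ (a - 1) * ‖x‖ ^ b)) := by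
        gcongr
    _ = _ := by ring

/-- `u` satisfies `-Δu - μ u / x_k² + |∇u|^q ≤ 0` at `x`: on the half-space `{x_k > 0}` the
distance to the boundary is `x_k`, so this is the classical subsolution inequality for
`-L_μ u + |∇u|^q = 0`. -/
def IsSubsolutionAt (μ q : ℝ) (u : EuclideanSpace ℝ (Fin N) → ℝ)
    (x : EuclideanSpace ℝ (Fin N)) : Prop :=
  ‖gradient u x‖ ^ q ≤ lap u x + μ / x k ^ 2 * u x

variable {k c a b} in
theorem isSubsolutionAt_coord_rpow_mul_norm_rpow {μ q : ℝ} (hc : 0 < c) (hq : 1 < q)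
    (hb : b ≤ 0) (hab : (a + b) * (q - 1) = q - 2) (hbN : 0 ≤ b * (b + 2 * a + N - 2))
    (hcq : c ^ (q - 1) * (|a| + |b|) ^ q ≤ a * (a - 1) + μ) (hx : 0 < x k) :
    IsSubsolutionAt k μ q (fun y => c * y k ^ a * ‖y‖ ^ b) x := by
  have htr := coord_le_norm k x
  have hr : 0 < ‖x‖ := hx.trans_le htr
  have hC : 0 ≤ a * (a - 1) + μ := le_trans (by positivity) hcq
  have he : 0 ≤ -(b * (q - 1)) := by nlinarith
  have hgrad := norm_gradient_coord_rpow_mul_norm_rpow_le k c a b hx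
  rw [abs_of_pos hc] at hgrad
  have hlap : c * (a * (a - 1) + μ) * (x k ^ (a - 2) * ‖x‖ ^ b)
      ≤ lap (fun y => c * y k ^ a * ‖y‖ ^ b) x
        + μ / x k ^ 2 * (c * x k ^ a * ‖x‖ ^ b) := by
    have hk2 : x k ^ (a - 2) * x k ^ 2 = x k ^ a := by
      rw [← Real.rpow_natCast, ← Real.rpow_add hx]
      congr 1
      ring
    have hdrift : 0 ≤ c * (b * (b + 2 * a + N - 2)) * (x k ^ a * ‖x‖ ^ (b - 2)) := by
      positivity
    have hhardy : μ / x k ^ 2 * (c * x k ^ a * ‖x‖ ^ b)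
        = c * μ * (x k ^ (a - 2) * ‖x‖ ^ b) := by
      rw [← hk2]
      field_simp
    rw [lap_coord_rpow_mul_norm_rpow k c a b hx, hhardy]
    linarith
  calc ‖gradient (fun y => c * y k ^ a * ‖y‖ ^ b) x‖ ^ q
      ≤ (c * (|a| + |b|) * (x k ^ (a - 1) * ‖x‖ ^ b)) ^ q :=
        Real.rpow_le_rpow (norm_nonneg _) hgrad (by linarith)
    _ = c * (c ^ (q - 1) * (|a| + |b|) ^ q)
          * (x k ^ (a - 2 + -(b * (q - 1))) * ‖x‖ ^ (b - -(b * (q - 1)))) := by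
        rw [show a - 2 + -(b * (q - 1)) = (a - 1) * q by linear_combination -hab,
          show b - -(b * (q - 1)) = b * q by ring, Real.mul_rpow (by positivity) (by positivity),
          Real.mul_rpow (by positivity) (by positivity),
          Real.mul_rpow (by positivity) (by positivity),
          ← Real.rpow_mul hx.le, ← Real.rpow_mul hr.le, Real.rpow_sub_one hc.ne']
        field_simp
    _ ≤ c * (a * (a - 1) + μ) * (x k ^ (a - 2) * ‖x‖ ^ b) := by
        exact mul_le_mul (mul_le_mul_of_nonneg_left hcq hc.le)
          (Real.rpow_add_mul_rpow_sub_le hx htr he _ _) (by positivity) (by positivity)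
    _ ≤ _ := hlap

end EuclideanSpace

/-- The separable subsolution `γ₂ x_N^{α₀} |x|^{-(2-q)/(q-1)-α₀}` on the half-space
(Step 1 of the proof of Theorem G). -/
theorem stmt_11 (N : ℕ) (hN : 3 ≤ N) (μ α q α₀ : ℝ)
    (hμ : μ ∈ Set.Ioc (0:ℝ) (1/4)) (hα : α = 1/2 + Real.sqrt (1/4 - μ))
    (hq1 : 1 < q)
    (hα₀ : α₀ ∈ Set.Ioo α 1) (hq3 : q < ((N : ℝ) + α₀) / ((N : ℝ) + α₀ - 1)) :
    ∃ γ₂ : ℝ, 0 < γ₂ ∧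
      ∀ x : EuclideanSpace ℝ (Fin N), 0 < x (lastIdx N (by omega)) →
        ‖gradient (fun y => γ₂ * (y (lastIdx N (by omega))) ^ α₀
            * ‖y‖ ^ (-(2 - q) / (q - 1) - α₀)) x‖ ^ q
          ≤ lap (fun y => γ₂ * (y (lastIdx N (by omega))) ^ α₀
                * ‖y‖ ^ (-(2 - q) / (q - 1) - α₀)) x
            + (μ / (x (lastIdx N (by omega))) ^ 2) *
                (γ₂ * (x (lastIdx N (by omega))) ^ α₀ * ‖x‖ ^ (-(2 - q) / (q - 1) - α₀)) := by
  obtain ⟨-, hμ4⟩ := hμ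
  obtain ⟨hαα₀, -⟩ := hα₀
  set b := -(2 - q) / (q - 1) - α₀ with hb_def
  have hα₀pos : 0 < α₀ := lt_of_le_of_lt (by rw [hα]; positivity) hαα₀
  have hN3 : (3 : ℝ) ≤ N := by exact_mod_cast hN
  have hq3' : q * (N + α₀ - 1) < N + α₀ := (lt_div_iff₀ (by linarith)).1 hq3
  have hab : (α₀ + b) * (q - 1) = q - 2 := by
    rw [hb_def, add_sub_cancel, neg_div, neg_mul, div_mul_cancel₀ _ (sub_pos.2 hq1).ne']
    ring
  have hb : b < 0 := by nlinarith
  have hbN : b + 2 * α₀ + N - 2 < 0 := by nlinarith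
  obtain ⟨c, hc, hcq⟩ := exists_pos_rpow_mul_le (sub_pos.2 hq1).ne'
    (Real.rpow_pos_of_pos (add_pos_of_pos_of_nonneg (abs_pos.2 hα₀pos.ne') (abs_nonneg b)) q)
    (mul_sub_one_add_pos_of_sqrt_lt hμ4 (hα ▸ hαα₀))
  exact ⟨c, hc, fun x hx => EuclideanSpace.isSubsolutionAt_coord_rpow_mul_norm_rpow hc hq1 hb.le
    hab (mul_nonneg_of_nonpos_of_nonpos hb.le hbN.le) hcq hx⟩
end
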